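/- Let F(y) = (1/√π) ∫_{−y}^{y} e^{−x²} dx. Then as n → ∞, ∫₀^{n^{−3/4}} (1 − F(y))ⁿ dy = (1 + O(n^{−5/4})) · ∫₀^{n^{−3/4}} (1 − 2y/√π)ⁿ dy; in particular ∫₀^{n^{−3/4}} (1 − F(y))ⁿ dy = √π/(2(n+1)) + O(n^{−9/4}). -/

import Mathlib

open MeasureTheory Real Filter Asymptotics

/-- The cumulative distribution function of `|Z|` where `Z` is a centered Gaussian of
variance `1/2`: `F y = (1/√π) ∫_{-y}^{y} e^{-x²} dx`. -/
noncomputable def gaussAbsCDF (y : ℝ) : ℝ :=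
  (Real.sqrt Real.pi)⁻¹ * ∫ x in (-y)..y, Real.exp (-x ^ 2)

/-!
From `1 - x² ≤ e^{-x²} ≤ 1` one gets `2y/√π - y³ ≤ F y ≤ 2y/√π`, so on `[0, δ]`
with `δ = n^{-3/4}` the integrand `(1 - F y)ⁿ` lies between `gⁿ` and `(1 + 2δ³)ⁿ gⁿ`
for `g = 1 - 2y/√π`; since `n δ³ = n^{-5/4}` this is the relative error `O(n^{-5/4})`.
The comparison integral is explicit, `√π/(2(n+1)) · (1 - (1 - 2δ/√π)^{n+1})`, and
the correction term is at most `exp(-n^{1/4})`, which is negligible.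
-/

lemma one_le_sqrt_pi : 1 ≤ √π :=
  Real.one_le_sqrt.2 (by linarith [pi_gt_three])

lemma sqrt_pi_le_two : √π ≤ 2 :=
  (Real.sqrt_le_left (by norm_num)).2 (by linarith [pi_lt_d2])

lemma intervalIntegrable_exp_neg_sq (a b : ℝ) :
    IntervalIntegrable (fun x ↦ exp (-x ^ 2)) volume a b :=
  (by fun_prop : Continuous fun x : ℝ ↦ exp (-x ^ 2)).intervalIntegrable a b

lemma continuous_gaussAbsCDF : Continuous gaussAbsCDF := by
  have hsplit (y : ℝ) : ∫ x in (-y)..y, exp (-x ^ 2) =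
      (∫ x in (0 : ℝ)..y, exp (-x ^ 2)) - ∫ x in (0 : ℝ)..(-y), exp (-x ^ 2) :=
    (intervalIntegral.integral_interval_sub_left (intervalIntegrable_exp_neg_sq _ _)
      (intervalIntegrable_exp_neg_sq _ _)).symm
  have hprim : Continuous fun y : ℝ ↦ ∫ x in (0 : ℝ)..y, exp (-x ^ 2) :=
    intervalIntegral.continuous_primitive intervalIntegrable_exp_neg_sq 0
  unfold gaussAbsCDF
  simp only [hsplit]
  exact continuous_const.mul (hprim.sub (hprim.comp continuous_neg))

lemma gaussAbsCDF_le {y : ℝ} (hy : 0 ≤ y) : gaussAbsCDF y ≤ 2 * y / √π := by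
  have h : ∫ x in (-y)..y, exp (-x ^ 2) ≤ ∫ x in (-y)..y, (1 : ℝ) :=
    intervalIntegral.integral_mono_on (by linarith) (intervalIntegrable_exp_neg_sq _ _)
      intervalIntegrable_const fun x _ ↦ exp_le_one_iff.2 (by nlinarith)
  rw [gaussAbsCDF, ← div_eq_inv_mul]
  gcongr
  simpa [two_mul] using h

lemma sub_cube_le_gaussAbsCDF {y : ℝ} (hy : 0 ≤ y) : 2 * y / √π - y ^ 3 ≤ gaussAbsCDF y := by
  have h : ∫ x in (-y)..y, (1 - x ^ 2) ≤ ∫ x in (-y)..y, exp (-x ^ 2) :=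
    intervalIntegral.integral_mono_on (by linarith)
      ((continuous_const.sub (continuous_pow 2)).intervalIntegrable _ _)
      (intervalIntegrable_exp_neg_sq _ _) fun x _ ↦ by linarith [add_one_le_exp (-x ^ 2)]
  have hpoly : ∫ x in (-y)..y, (1 - x ^ 2) = 2 * y - 2 * y ^ 3 / 3 := by
    rw [intervalIntegral.integral_sub intervalIntegrable_const
      ((continuous_pow 2).intervalIntegrable _ _),
      intervalIntegral.integral_const, integral_pow]
    ring
  have hcube : 2 * y ^ 3 / 3 / √π ≤ y ^ 3 :=
    (div_le_self (by positivity) one_le_sqrt_pi).trans (by linarith [pow_nonneg hy 3])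
  rw [gaussAbsCDF, ← div_eq_inv_mul]
  calc 2 * y / √π - y ^ 3 ≤ (2 * y - 2 * y ^ 3 / 3) / √π := by rw [sub_div]; linarith
    _ ≤ _ := by gcongr; linarith

lemma half_le_one_sub_two_mul_div_sqrt_pi {y : ℝ} (hy0 : 0 ≤ y) (hy : y ≤ 1 / 4) :
    1 / 2 ≤ 1 - 2 * y / √π := by
  linarith [div_le_self (by linarith : 0 ≤ 2 * y) one_le_sqrt_pi]

lemma one_sub_gaussAbsCDF_le {y : ℝ} (hy0 : 0 ≤ y) (hy : y ≤ 1 / 4) :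
    1 - gaussAbsCDF y ≤ (1 - 2 * y / √π) * (1 + 2 * y ^ 3) := by
  have := half_le_one_sub_two_mul_div_sqrt_pi hy0 hy
  nlinarith [sub_cube_le_gaussAbsCDF hy0, pow_nonneg hy0 3]

lemma integral_one_sub_mul_pow (n : ℕ) {c : ℝ} (hc : c ≠ 0) (d : ℝ) :
    ∫ y in (0 : ℝ)..d, (1 - c * y) ^ n = (1 - (1 - c * d) ^ (n + 1)) / (c * (n + 1)) := by
  rw [intervalIntegral.integral_comp_sub_mul (fun x ↦ x ^ n) hc, integral_pow]
  simp only [mul_zero, sub_zero, one_pow, smul_eq_mul]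
  field_simp

lemma integral_one_sub_two_mul_div_sqrt_pi_pow (n : ℕ) (d : ℝ) :
    ∫ y in (0 : ℝ)..d, (1 - 2 * y / √π) ^ n =
      √π / (2 * (n + 1)) * (1 - (1 - 2 * d / √π) ^ (n + 1)) := by
  simp_rw [mul_div_right_comm (2 : ℝ)]
  rw [integral_one_sub_mul_pow n (by positivity) d]
  field_simp

section
variable (n : ℕ) {δ : ℝ}

lemma intervalIntegrable_one_sub_gaussAbsCDF_pow (a b : ℝ) :
    IntervalIntegrable (fun y ↦ (1 - gaussAbsCDF y) ^ n) volume a b :=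
  ((continuous_const.sub continuous_gaussAbsCDF).pow n).intervalIntegrable a b

lemma intervalIntegrable_one_sub_two_mul_div_sqrt_pi_pow (a b : ℝ) :
    IntervalIntegrable (fun y ↦ (1 - 2 * y / √π) ^ n) volume a b :=
  (by fun_prop : Continuous fun y : ℝ ↦ (1 - 2 * y / √π) ^ n).intervalIntegrable a b

lemma integral_one_sub_two_mul_div_sqrt_pi_pow_pos (hδ0 : 0 < δ) (hδ : δ ≤ 1 / 4) :
    0 < ∫ y in (0 : ℝ)..δ, (1 - 2 * y / √π) ^ n :=
  intervalIntegral.intervalIntegral_pos_of_pos_on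
    (intervalIntegrable_one_sub_two_mul_div_sqrt_pi_pow n _ _)
    (fun y hy ↦ pow_pos (by
      linarith [half_le_one_sub_two_mul_div_sqrt_pi hy.1.le (hy.2.le.trans hδ)]) n) hδ0

lemma integral_one_sub_two_mul_div_sqrt_pi_pow_le (hδ0 : 0 ≤ δ) (hδ : δ ≤ 1 / 4) :
    ∫ y in (0 : ℝ)..δ, (1 - 2 * y / √π) ^ n ≤ ∫ y in (0 : ℝ)..δ, (1 - gaussAbsCDF y) ^ n :=
  intervalIntegral.integral_mono_on hδ0
    (intervalIntegrable_one_sub_two_mul_div_sqrt_pi_pow n _ _)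
    (intervalIntegrable_one_sub_gaussAbsCDF_pow n _ _) fun y hy ↦
      pow_le_pow_left₀ (by linarith [half_le_one_sub_two_mul_div_sqrt_pi hy.1 (hy.2.trans hδ)])
        (by linarith [gaussAbsCDF_le hy.1]) n

lemma integral_one_sub_gaussAbsCDF_pow_le (hδ0 : 0 ≤ δ) (hδ : δ ≤ 1 / 4) :
    ∫ y in (0 : ℝ)..δ, (1 - gaussAbsCDF y) ^ n ≤
      exp (2 * n * δ ^ 3) * ∫ y in (0 : ℝ)..δ, (1 - 2 * y / √π) ^ n := by
  rw [← intervalIntegral.integral_const_mul]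
  refine intervalIntegral.integral_mono_on hδ0
    (intervalIntegrable_one_sub_gaussAbsCDF_pow n _ _)
    ((intervalIntegrable_one_sub_two_mul_div_sqrt_pi_pow n _ _).const_mul _)
    fun y ⟨hy0, hyδ⟩ ↦ ?_
  have hg := half_le_one_sub_two_mul_div_sqrt_pi hy0 (hyδ.trans hδ)
  have hcube : 1 + 2 * y ^ 3 ≤ exp (2 * δ ^ 3) := by
    nlinarith [add_one_le_exp (2 * δ ^ 3), pow_le_pow_left₀ hy0 hyδ 3]
  calc (1 - gaussAbsCDF y) ^ n ≤ ((1 - 2 * y / √π) * (1 + 2 * y ^ 3)) ^ n :=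
        pow_le_pow_left₀ (by linarith [gaussAbsCDF_le hy0])
          (one_sub_gaussAbsCDF_le hy0 (hyδ.trans hδ)) n
    _ ≤ ((1 - 2 * y / √π) * exp (2 * δ ^ 3)) ^ n := by gcongr
    _ = exp (2 * n * δ ^ 3) * (1 - 2 * y / √π) ^ n := by
        rw [mul_pow, ← exp_nat_mul]; ring_nf
end

lemma eventually_natCast_rpow_neg_le {s : ℝ} (hs : 0 < s) {ε : ℝ} (hε : 0 < ε) :
    ∀ᶠ n : ℕ in atTop, (n : ℝ) ^ (-s) ≤ ε :=
  ((tendsto_rpow_neg_atTop hs).comp tendsto_natCast_atTop_atTop).eventually_le_const hε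

lemma eventually_natCast_rpow_neg_three_fourths_le_quarter :
    ∀ᶠ n : ℕ in atTop, (n : ℝ) ^ (-(3 : ℝ) / 4) ≤ 1 / 4 := by
  simpa only [neg_div] using
    eventually_natCast_rpow_neg_le (s := 3 / 4) (by norm_num) (by norm_num)

lemma natCast_mul_rpow_neg_three_fourths_pow_three (n : ℕ) :
    n * ((n : ℝ) ^ (-(3 : ℝ) / 4)) ^ 3 = (n : ℝ) ^ (-(5 : ℝ) / 4) := by
  rw [← rpow_natCast, ← rpow_mul n.cast_nonneg, mul_comm,
    ← rpow_add_one' n.cast_nonneg (by norm_num)]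
  norm_num

lemma isBigO_integral_ratio_sub_one :
    (fun n : ℕ ↦ (∫ y in (0 : ℝ)..((n : ℝ) ^ (-(3 : ℝ) / 4)), (1 - gaussAbsCDF y) ^ n) /
      (∫ y in (0 : ℝ)..((n : ℝ) ^ (-(3 : ℝ) / 4)), (1 - 2 * y / √π) ^ n) - 1)
      =O[atTop] fun n : ℕ ↦ (n : ℝ) ^ (-(5 : ℝ) / 4) := by
  have hsmall : ∀ᶠ n : ℕ in atTop, (n : ℝ) ^ (-(5 : ℝ) / 4) ≤ 1 / 2 := by
    simpa only [neg_div] using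
      eventually_natCast_rpow_neg_le (s := 5 / 4) (by norm_num) (by norm_num)
  refine IsBigO.of_bound 4 ?_
  filter_upwards [eventually_gt_atTop 0, eventually_natCast_rpow_neg_three_fourths_le_quarter,
    hsmall] with n hn hδ hε
  have hδ0 : 0 < (n : ℝ) ^ (-(3 : ℝ) / 4) := rpow_pos_of_pos (Nat.cast_pos.2 hn) _
  have hJ := integral_one_sub_two_mul_div_sqrt_pi_pow_pos n hδ0 hδ
  have hlow := integral_one_sub_two_mul_div_sqrt_pi_pow_le n hδ0.le hδ
  have hup := integral_one_sub_gaussAbsCDF_pow_le n hδ0.le hδ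
  rw [mul_assoc, natCast_mul_rpow_neg_three_fourths_pow_three] at hup
  have hε0 : 0 ≤ (n : ℝ) ^ (-(5 : ℝ) / 4) := rpow_nonneg n.cast_nonneg _
  have hexp := abs_exp_sub_one_le (x := 2 * (n : ℝ) ^ (-(5 : ℝ) / 4))
    (by rw [abs_of_nonneg (by positivity)]; linarith)
  rw [abs_of_nonneg (by linarith [add_one_le_exp (2 * (n : ℝ) ^ (-(5 : ℝ) / 4))]),
    abs_of_nonneg (by positivity)] at hexp
  rw [norm_of_nonneg hε0, norm_of_nonneg (sub_nonneg.2 ((one_le_div hJ).2 hlow))]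
  have := (div_le_iff₀ hJ).2 hup
  linarith

lemma isBigO_one_sub_two_mul_rpow_div_sqrt_pi_pow :
    (fun n : ℕ ↦ (1 - 2 * (n : ℝ) ^ (-(3 : ℝ) / 4) / √π) ^ (n + 1))
      =O[atTop] fun n : ℕ ↦ (n : ℝ) ^ (-(5 : ℝ) / 4) := by
  have hexp : (fun n : ℕ ↦ exp (-(n : ℝ) ^ ((1 : ℝ) / 4)))
      =O[atTop] fun n : ℕ ↦ (n : ℝ) ^ (-(5 : ℝ) / 4) := by
    have hquarter : Tendsto (fun n : ℕ ↦ (n : ℝ) ^ ((1 : ℝ) / 4)) atTop atTop :=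
      (tendsto_rpow_atTop (by norm_num)).comp tendsto_natCast_atTop_atTop
    refine ((isLittleO_exp_neg_mul_rpow_atTop one_pos (-5)).isBigO.comp_tendsto
      hquarter).congr (fun n ↦ by simp) (fun n ↦ ?_)
    simp only [Function.comp_apply, ← rpow_mul n.cast_nonneg]
    norm_num
  refine IsBigO.trans (IsBigO.of_bound 1 ?_) hexp
  filter_upwards [eventually_natCast_rpow_neg_three_fourths_le_quarter] with n hδ
  have hδ0 : 0 ≤ (n : ℝ) ^ (-(3 : ℝ) / 4) := rpow_nonneg n.cast_nonneg _
  have hbase := half_le_one_sub_two_mul_div_sqrt_pi hδ0 hδ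
  have hquarter : (n : ℝ) ^ ((1 : ℝ) / 4) = n * (n : ℝ) ^ (-(3 : ℝ) / 4) := by
    rw [mul_comm, ← rpow_add_one' n.cast_nonneg (by norm_num)]
    norm_num
  have hslope : (n : ℝ) ^ ((1 : ℝ) / 4) ≤ (n + 1) * (2 * (n : ℝ) ^ (-(3 : ℝ) / 4) / √π) := by
    have hδle : (n : ℝ) ^ (-(3 : ℝ) / 4) ≤ 2 * (n : ℝ) ^ (-(3 : ℝ) / 4) / √π := by
      rw [le_div_iff₀ (by positivity)]
      nlinarith [sqrt_pi_le_two]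
    rw [hquarter]
    exact mul_le_mul (by linarith) hδle hδ0 (by positivity)
  rw [norm_of_nonneg (pow_nonneg (by linarith) _), norm_of_nonneg (exp_pos _).le, one_mul]
  calc (1 - 2 * (n : ℝ) ^ (-(3 : ℝ) / 4) / √π) ^ (n + 1)
      ≤ exp (-(2 * (n : ℝ) ^ (-(3 : ℝ) / 4) / √π)) ^ (n + 1) :=
        pow_le_pow_left₀ (by linarith) (one_sub_le_exp_neg _) _
    _ = exp (-((n + 1) * (2 * (n : ℝ) ^ (-(3 : ℝ) / 4) / √π))) := by
        rw [← exp_nat_mul]; push_cast; ring_nf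
    _ ≤ exp (-(n : ℝ) ^ ((1 : ℝ) / 4)) := exp_le_exp.2 (by linarith)

lemma isBigO_sqrt_pi_div_two_mul_add_one :
    (fun n : ℕ ↦ √π / (2 * ((n : ℝ) + 1))) =O[atTop] fun n : ℕ ↦ (n : ℝ)⁻¹ := by
  refine IsBigO.of_bound 1 ?_
  filter_upwards [eventually_gt_atTop 0] with n hn
  have hn' : (0 : ℝ) < n := Nat.cast_pos.2 hn
  rw [norm_of_nonneg (by positivity), norm_of_nonneg (by positivity), one_mul,
    div_le_iff₀ (by positivity), inv_mul_eq_div, le_div_iff₀ hn']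
  nlinarith [sqrt_pi_le_two]

lemma isBigO_integral_one_sub_two_mul_div_sqrt_pi_pow :
    (fun n : ℕ ↦ ∫ y in (0 : ℝ)..((n : ℝ) ^ (-(3 : ℝ) / 4)), (1 - 2 * y / √π) ^ n)
      =O[atTop] fun n : ℕ ↦ (n : ℝ)⁻¹ := by
  refine IsBigO.trans (IsBigO.of_bound 1 ?_) isBigO_sqrt_pi_div_two_mul_add_one
  filter_upwards [eventually_natCast_rpow_neg_three_fourths_le_quarter] with n hδ
  have hδ0 : 0 ≤ (n : ℝ) ^ (-(3 : ℝ) / 4) := rpow_nonneg n.cast_nonneg _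
  have hbase := half_le_one_sub_two_mul_div_sqrt_pi hδ0 hδ
  have hle : 1 - 2 * (n : ℝ) ^ (-(3 : ℝ) / 4) / √π ≤ 1 := by
    linarith [div_nonneg (by positivity : 0 ≤ 2 * (n : ℝ) ^ (-(3 : ℝ) / 4)) (sqrt_nonneg π)]
  have hpow := pow_le_one₀ (n := n + 1) (by linarith) hle
  rw [integral_one_sub_two_mul_div_sqrt_pi_pow, norm_mul, one_mul]
  refine mul_le_of_le_one_right (norm_nonneg _) ?_
  rw [norm_of_nonneg (sub_nonneg.2 hpow)]
  linarith [pow_nonneg (by linarith : (0 : ℝ) ≤ 1 - 2 * (n : ℝ) ^ (-(3 : ℝ) / 4) / √π) (n + 1)]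

/-- **The near-zero integral:** as `n → ∞`,
`∫₀^{n^{-3/4}} (1 - F y)ⁿ dy = (1 + O(n^{-5/4})) · ∫₀^{n^{-3/4}} (1 - 2y/√π)ⁿ dy`, and in
particular `∫₀^{n^{-3/4}} (1 - F y)ⁿ dy = √π/(2(n+1)) + O(n^{-9/4})`. -/
theorem near_zero_integral_asymptotic :
    (∃ e : ℕ → ℝ, (e =O[atTop] fun n : ℕ => (n : ℝ) ^ (-(5 : ℝ) / 4)) ∧
      ∀ᶠ n : ℕ in atTop,
        (∫ y in (0 : ℝ)..((n : ℝ) ^ (-(3 : ℝ) / 4)), (1 - gaussAbsCDF y) ^ n) =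
          (1 + e n) *
            ∫ y in (0 : ℝ)..((n : ℝ) ^ (-(3 : ℝ) / 4)),
              (1 - 2 * y / Real.sqrt Real.pi) ^ n) ∧
    (fun n : ℕ =>
        (∫ y in (0 : ℝ)..((n : ℝ) ^ (-(3 : ℝ) / 4)), (1 - gaussAbsCDF y) ^ n) -
          Real.sqrt Real.pi / (2 * (n + 1))) =O[atTop]
      fun n : ℕ => (n : ℝ) ^ (-(9 : ℝ) / 4) := by
  have hJpos : ∀ᶠ n : ℕ in atTop,
      0 < ∫ y in (0 : ℝ)..((n : ℝ) ^ (-(3 : ℝ) / 4)), (1 - 2 * y / √π) ^ n := by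
    filter_upwards [eventually_gt_atTop 0, eventually_natCast_rpow_neg_three_fourths_le_quarter]
      with n hn hδ
    exact integral_one_sub_two_mul_div_sqrt_pi_pow_pos n
      (rpow_pos_of_pos (Nat.cast_pos.2 hn) _) hδ
  refine ⟨⟨_, isBigO_integral_ratio_sub_one, hJpos.mono fun n hn ↦ ?_⟩, ?_⟩
  · rw [add_sub_cancel, div_mul_cancel₀ _ hn.ne']
  have hrpow : ∀ᶠ n : ℕ in atTop,
      (n : ℝ) ^ (-(5 : ℝ) / 4) * (n : ℝ)⁻¹ = (n : ℝ) ^ (-(9 : ℝ) / 4) := by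
    filter_upwards [eventually_gt_atTop 0] with n hn
    rw [← rpow_neg_one, ← rpow_add (Nat.cast_pos.2 hn)]
    norm_num
  -- With `J = c (1 - t)`, `c = √π/(2(n+1))`, `t = (1 - 2δ/√π)^{n+1}`: `I - c = (I/J - 1) J - t c`.
  refine ((isBigO_integral_ratio_sub_one.mul isBigO_integral_one_sub_two_mul_div_sqrt_pi_pow).sub
    (isBigO_one_sub_two_mul_rpow_div_sqrt_pi_pow.mul isBigO_sqrt_pi_div_two_mul_add_one)).congr'
    ?_ hrpow
  filter_upwards [hJpos] with n hn
  rw [sub_one_mul, div_mul_cancel₀ _ hn.ne', integral_one_sub_two_mul_div_sqrt_pi_pow]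
  ring
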